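/- Let n be a positive integer and let p, q be coprime integers with q ≥ 1 and p > n·q (i.e., p/q > n). Then there exist a natural number k and a finite sequence of integer pairs (a_0, b_0), (a_1, b_1), …, (a_k, b_k) such that (a_0, b_0) = (n, 1), (a_k, b_k) = (p, q), b_i ≥ 1 for every i, and a_{i+1}·b_i − a_i·b_{i+1} = 1 for every 0 ≤ i < k. (In particular each pair (a_i, b_i) is coprime and the slopes a_i/b_i strictly increase from n to p/q along the sequence.) -/

import Mathlib

/-!
Every reduced fraction `p/q` with `q ≥ 1` has a left Farey parent `a/b`, with `p b - a q = 1`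
and `1 ≤ b ≤ q`: take `b ≡ p⁻¹ (mod q)`. If `p/q > n`, the parent still satisfies `a/b ≥ n`,
with equality only when it is `n/1` itself, and its height `a - n b` above `n` is smaller than
`p - n q`, because `(a - n b) q = b (p - n q) - 1`. Descending through parents therefore reaches
`n/1`, and reading the descent backwards gives the path.
-/

open Relation

theorem Relation.ReflTransGen.exists_seq {α : Type*} {r : α → α → Prop} {x y : α}
    (h : ReflTransGen r x y) :
    ∃ (k : ℕ) (f : ℕ → α), f 0 = x ∧ f k = y ∧ ∀ i < k, r (f i) (f (i + 1)) := by
  induction h with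
  | refl => exact ⟨0, fun _ => x, rfl, rfl, by simp⟩
  | @tail y z _ hyz ih =>
    obtain ⟨k, f, hf0, hfk, hf⟩ := ih
    refine ⟨k + 1, Function.update f (k + 1) z, by simp [hf0], by simp, fun i hi => ?_⟩
    rcases Nat.lt_succ_iff_lt_or_eq.mp hi with hi | rfl
    · rw [Function.update_of_ne (by omega), Function.update_of_ne (by omega)]
      exact hf i hi
    · simpa [hfk] using hyz

/-- A Farey edge from `x.1 / x.2` up to `y.1 / y.2`, the target having positive denominator. -/
def FareyEdge (x y : ℤ × ℤ) : Prop :=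
  1 ≤ y.2 ∧ y.1 * x.2 - x.1 * y.2 = 1

theorem exists_fareyParent {p q : ℤ} (hcop : Int.gcd p q = 1) (hq : 1 ≤ q) :
    ∃ a b : ℤ, 1 ≤ b ∧ b ≤ q ∧ p * b - a * q = 1 := by
  obtain ⟨u, v, huv⟩ := Int.isCoprime_iff_gcd_eq_one.mpr hcop
  set b := 1 + (u - 1) % q
  have hpb : p * b ≡ 1 [ZMOD q] :=
    calc p * b ≡ p * (1 + (u - 1)) [ZMOD q] := ((Int.mod_modEq _ _).add_left 1).mul_left p
      _ = 1 + q * (-v) := by linarith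
      _ ≡ 1 [ZMOD q] := Int.modEq_iff_dvd.mpr ⟨v, by ring⟩
  obtain ⟨a, ha⟩ := hpb.symm.dvd
  refine ⟨a, b, ?_, ?_, by linarith⟩
  · have := Int.emod_nonneg (u - 1) (by omega : q ≠ 0); omega
  · have := Int.emod_lt_of_pos (u - 1) (by omega : 0 < q); omega

theorem fareyParent_eq_or_mul_lt {n p q a b : ℤ} (hq : 1 ≤ q) (hb : 1 ≤ b) (hpq : n * q < p)
    (hab : p * b - a * q = 1) : (a = n ∧ b = 1) ∨ n * b < a := by
  have hle : n * b ≤ a := le_of_mul_le_mul_right (by nlinarith) (by omega : 0 < q)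
  rcases hle.eq_or_lt with heq | hlt
  · have : b * (p - n * q) = 1 := by rw [← hab, ← heq]; ring
    have hb1 : b = 1 := by nlinarith
    subst hb1
    exact .inl ⟨by linarith, rfl⟩
  · exact .inr hlt

theorem fareyParent_sub_mul_lt {n p q a b : ℤ} (hq : 1 ≤ q) (hbq : b ≤ q) (hpq : n * q < p)
    (hab : p * b - a * q = 1) : a - n * b < p - n * q := by
  have : (a - n * b) * q = b * (p - n * q) - 1 := by linarith
  nlinarith [mul_le_mul_of_nonneg_right hbq (by linarith : 0 ≤ p - n * q)]

theorem reflTransGen_fareyEdge (n : ℤ) {p q : ℤ} (hcop : Int.gcd p q = 1) (hq : 1 ≤ q)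
    (hpq : n * q < p) : ReflTransGen FareyEdge (n, 1) (p, q) := by
  obtain ⟨a, b, hb, hbq, hab⟩ := exists_fareyParent hcop hq
  have hedge : FareyEdge (a, b) (p, q) := ⟨hq, hab⟩
  rcases fareyParent_eq_or_mul_lt hq hb hpq hab with ⟨rfl, rfl⟩ | hlt
  · exact .single hedge
  · have hcop' : Int.gcd a b = 1 := Int.isCoprime_iff_gcd_eq_one.mp ⟨-q, p, by linarith⟩
    have hdescent := fareyParent_sub_mul_lt hq hbq hpq hab
    exact (reflTransGen_fareyEdge n hcop' hb hlt).tail hedge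
termination_by (p - n * q).toNat

theorem farey_path_from_integer_slope_general (n p q : ℤ)
    (hcop : Int.gcd p q = 1) (hq : 1 ≤ q) (hpq : n * q < p) :
    ∃ (k : ℕ) (a b : ℕ → ℤ),
      a 0 = n ∧ b 0 = 1 ∧ a k = p ∧ b k = q ∧
      (∀ i ≤ k, 1 ≤ b i) ∧
      (∀ i < k, a (i + 1) * b i - a i * b (i + 1) = 1) := by
  obtain ⟨k, f, hf0, hfk, hf⟩ := (reflTransGen_fareyEdge n hcop hq hpq).exists_seq
  refine ⟨k, fun i => (f i).1, fun i => (f i).2, by simp [hf0], by simp [hf0], by simp [hfk],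
    by simp [hfk], fun i hi => ?_, fun i hi => (hf i hi).2⟩
  cases i with
  | zero => simp [hf0]
  | succ i => exact (hf i (by omega)).1

/-- Existence of a monotone path of Farey-tessellation edges from the integer slope `n`
(represented by the pair `(n,1)`) to the rational slope `p/q` (with `gcd(p,q) = 1`,
`q ≥ 1` and `p/q > n`): there is a finite sequence of integer pairs `(a_i, b_i)`,
starting at `(n,1)` and ending at `(p,q)`, with all `b_i ≥ 1`, in which consecutive
pairs are Farey neighbors: `a_{i+1}·b_i − a_i·b_{i+1} = 1`. -/
theorem farey_path_from_integer_slope (n p q : ℤ) (hn : 0 < n)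
    (hcop : Int.gcd p q = 1) (hq : 1 ≤ q) (hpq : n * q < p) :
    ∃ (k : ℕ) (a b : ℕ → ℤ),
      a 0 = n ∧ b 0 = 1 ∧ a k = p ∧ b k = q ∧
      (∀ i ≤ k, 1 ≤ b i) ∧
      (∀ i < k, a (i + 1) * b i - a i * b (i + 1) = 1) :=
  farey_path_from_integer_slope_general n p q hcop hq hpq
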